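/- Let 𝒢 → M be a locally trivial group bundle with 2-cocycle ω and Haar measure λ on the fiber group, and let F ⊆ M be closed. If f ∈ C_c(𝒢) vanishes on 𝒢|_F = π⁻¹(F), then f lies in the closed ideal I_F of C*(𝒢, ω), i.e., f is a limit (in the I-norm, hence in the C*-norm) of elements of the form φ·f with φ ∈ C₀(M∖F). Concretely: for every ε > 0 there exists φ ∈ C₀(M) with 0 ≤ φ ≤ 1, φ = 0 on F, and ‖f − φ·f‖_I < ε. -/

import Mathlib

/-- A locally trivial bundle of locally compact groups with fiber group `G`:
`π : 𝒢 → M` is a continuous open surjection, each fiber `π⁻¹(m)` is identified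
with `G` via `φ m`, and locally `π⁻¹(U)` is homeomorphic to `U × G` compatibly
with `π` and the fiber identifications. -/
structure GroupBundle (𝒢 M G : Type*) [TopologicalSpace 𝒢] [TopologicalSpace M]
    [TopologicalSpace G] [Group G] [IsTopologicalGroup G] where
  π : 𝒢 → M
  continuous_π : Continuous π
  isOpenMap_π : IsOpenMap π
  surjective_π : Function.Surjective π
  φ : (m : M) → {x : 𝒢 // π x = m} ≃ G
  locTriv : ∀ m : M, ∃ U : Set M, IsOpen U ∧ m ∈ U ∧
    ∃ h : (π ⁻¹' U) ≃ₜ (U × G),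
      ∀ x : π ⁻¹' U, ((h x).1 : M) = π x.1 ∧ (h x).2 = φ (π x.1) ⟨x.1, rfl⟩

namespace GroupBundle

variable {𝒢 M G : Type*} [TopologicalSpace 𝒢] [TopologicalSpace M]
  [TopologicalSpace G] [Group G] [IsTopologicalGroup G]

/-- The element of the fiber over `m` with `G`-coordinate `g`. -/
def elt (B : GroupBundle 𝒢 M G) (m : M) (g : G) : 𝒢 := ((B.φ m).symm g).1

lemma π_elt (B : GroupBundle 𝒢 M G) (m : M) (g : G) : B.π (B.elt m g) = m :=
  ((B.φ m).symm g).2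

/-- The `G`-coordinate of a point of `𝒢`. -/
def coord (B : GroupBundle 𝒢 M G) (x : 𝒢) : G := B.φ (B.π x) ⟨x, rfl⟩

/-- The set of composable pairs `𝒢⁽²⁾ = {(x,y) : π x = π y}`. -/
def comp2 (B : GroupBundle 𝒢 M G) : Set (𝒢 × 𝒢) := {p | B.π p.1 = B.π p.2}

/-- Fiberwise multiplication, defined via the identifications of the fibers with `G`. -/
noncomputable def mul (B : GroupBundle 𝒢 M G) (p : B.comp2) : 𝒢 :=
  B.elt (B.π p.1.1) (B.coord p.1.1 * B.coord p.1.2)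

/-- Fiberwise inversion, defined via the identifications of the fibers with `G`. -/
noncomputable def inv (B : GroupBundle 𝒢 M G) (x : 𝒢) : 𝒢 :=
  B.elt (B.π x) (B.coord x)⁻¹

end GroupBundle


open MeasureTheory
open scoped ZeroAtInfty

namespace GroupBundle

variable {𝒢 M G : Type*} [TopologicalSpace 𝒢] [TopologicalSpace M]
  [TopologicalSpace G] [Group G] [IsTopologicalGroup G]

/-- The `I`-norm
`‖f‖_I = max { sup_m ∫_{𝒢ₘ} |f(x)| dλ(x), sup_m ∫_{𝒢ₘ} |f(x⁻¹)| dλ(x) }`,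
the fiber integrals being computed in the `G`-coordinates of the fibers. -/
noncomputable def Inorm [MeasurableSpace G] (B : GroupBundle 𝒢 M G) (μ : Measure G)
    (f : 𝒢 → ℂ) : ℝ :=
  max (⨆ m : M, ∫ g : G, ‖f (B.elt m g)‖ ∂μ)
      (⨆ m : M, ∫ g : G, ‖f (B.elt m g⁻¹)‖ ∂μ)

end GroupBundle


/-!
Fix `δ > 0`. The set where `‖f‖ ≥ δ` is compact and lies over a compact subset of `M ∖ F`,
so Urysohn's lemma gives `φ` equal to `1` over it and `0` on `F`; then `‖f - φ·f‖ ≤ δ`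
everywhere. In fiber coordinates `f - φ·f` and its inverse are supported in the compact set
`S = L ∪ L⁻¹`, `L` the coordinates of `supp f`, so every fiber integral in the `I`-norm is at
most `δ λ(S)`, which is small for `δ` small because `S` does not depend on `δ`.
-/

open Set

theorem integral_norm_le_mul_measureReal_of_support_subset {X E : Type*} [MeasurableSpace X]
    [NormedAddCommGroup E] [NormedSpace ℝ E] {μ : Measure X} {h : X → E} {s : Set X}
    {C : ℝ} (hs : μ s < ⊤) (hC : ∀ x, ‖h x‖ ≤ C) (hsupp : Function.support h ⊆ s) :
    ∫ x, ‖h x‖ ∂μ ≤ C * μ.real s := by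
  rw [← setIntegral_eq_integral_of_forall_compl_eq_zero
    fun x hx => norm_eq_zero.2 (Function.notMem_support.1 fun h' => hx (hsupp h'))]
  refine (le_abs_self _).trans ?_
  simpa using norm_setIntegral_le_of_norm_le_const hs fun x _ => (norm_norm (h x)).trans_le (hC x)

theorem norm_sub_mul_le_of_eqOn_one {X Y : Type*} {p : X → Y} {f : X → ℂ} {φ : Y → ℝ} {δ : ℝ}
    (hδ : 0 ≤ δ) (hφ : ∀ y, φ y ∈ Icc 0 1) (h1 : EqOn φ 1 (p '' {x | δ ≤ ‖f x‖})) (x : X) :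
    ‖f x - φ (p x) * f x‖ ≤ δ := by
  rcases lt_or_ge ‖f x‖ δ with hsmall | hbig
  · have hrw : f x - φ (p x) * f x = ((1 - φ (p x) : ℝ) : ℂ) * f x := by push_cast; ring
    rw [hrw, norm_mul, Complex.norm_real, Real.norm_eq_abs,
      abs_of_nonneg (sub_nonneg.2 (hφ (p x)).2)]
    nlinarith [(hφ (p x)).1, (hφ (p x)).2, norm_nonneg (f x)]
  · simpa [h1 (mem_image_of_mem p hbig)] using hδ

namespace GroupBundle

variable {𝒢 M G : Type*} [TopologicalSpace 𝒢] [TopologicalSpace M]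
  [TopologicalSpace G] [Group G] [IsTopologicalGroup G] (B : GroupBundle 𝒢 M G)

theorem coord_elt (m : M) (g : G) : B.coord (B.elt m g) = g := by
  have hcoord : ∀ (x : 𝒢) (m' : M) (h : B.π x = m'), B.coord x = B.φ m' ⟨x, h⟩ := by
    rintro x m' rfl; rfl
  rw [hcoord _ m (B.π_elt m g), show (⟨B.elt m g, B.π_elt m g⟩ : {x // B.π x = m}) =
    (B.φ m).symm g from rfl, Equiv.apply_symm_apply]

theorem continuous_coord : Continuous B.coord := continuous_iff_continuousAt.2 fun x => by
  obtain ⟨U, hU, hxU, h, hh⟩ := B.locTriv (B.π x)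
  have hcont : ContinuousOn B.coord (B.π ⁻¹' U) := by
    rw [continuousOn_iff_continuous_domRestrict]
    convert continuous_snd.comp h.continuous using 1
    funext y
    exact ((hh y).2).symm
  exact hcont.continuousAt ((hU.preimage B.continuous_π).mem_nhds hxU)

theorem Inorm_le_of_norm_le [MeasurableSpace G] (μ : Measure G) {u : 𝒢 → ℂ} {S : Set G}
    (hS : μ S < ⊤) (hSinv : S⁻¹ ⊆ S) {δ : ℝ} (hδ : 0 ≤ δ) (hu : ∀ x, ‖u x‖ ≤ δ)
    (hsupp : ∀ x, u x ≠ 0 → B.coord x ∈ S) :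
    B.Inorm μ u ≤ δ * μ.real S := by
  refine max_le (Real.iSup_le (fun m => ?_) (by positivity))
    (Real.iSup_le (fun m => ?_) (by positivity))
  · refine integral_norm_le_mul_measureReal_of_support_subset hS (fun g => hu _) fun g hg => ?_
    simpa [coord_elt] using hsupp _ hg
  · refine integral_norm_le_mul_measureReal_of_support_subset hS (fun g => hu _) fun g hg => ?_
    exact hSinv (by simpa [coord_elt] using hsupp _ hg)

end GroupBundle

theorem statement14_general {𝒢 M G : Type*} [TopologicalSpace 𝒢] [TopologicalSpace M]
    [TopologicalSpace G] [Group G] [IsTopologicalGroup G]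
    [LocallyCompactSpace M] [T2Space M]
    [MeasurableSpace G]
    (B : GroupBundle 𝒢 M G) (μ : Measure G) [μ.IsHaarMeasure]
    (F : Set M) (hF : IsClosed F)
    (f : 𝒢 → ℂ) (hf : Continuous f) (hfs : HasCompactSupport f)
    (hvanish : ∀ x : 𝒢, B.π x ∈ F → f x = 0)
    (ε : ℝ) (hε : 0 < ε) :
    ∃ φ : C₀(M, ℝ), (∀ m : M, 0 ≤ φ m ∧ φ m ≤ 1) ∧ (∀ m ∈ F, φ m = 0) ∧
      B.Inorm μ (fun x => f x - (φ (B.π x) : ℂ) * f x) < ε := by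
  set L := B.coord '' tsupport f
  set S := L ∪ L⁻¹
  have hS : IsCompact S := (hfs.image B.continuous_coord).union (hfs.image B.continuous_coord).inv
  set δ := ε / (μ.real S + 1)
  have hδ : 0 < δ := by positivity
  have hbig : IsCompact (B.π '' {x | δ ≤ ‖f x‖}) :=
    (hfs.of_isClosed_subset (isClosed_le continuous_const hf.norm) fun x hx =>
      subset_tsupport f (norm_pos_iff.1 (hδ.trans_le hx))).image B.continuous_π
  have hdisj : Disjoint (B.π '' {x | δ ≤ ‖f x‖}) F := by
    rw [disjoint_left]
    rintro _ ⟨x, hx, rfl⟩ hxF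
    exact hδ.not_ge (by simpa [hvanish x hxF] using hx)
  obtain ⟨φ, hφ1, hφ0, hφc, hφI⟩ := exists_continuous_one_zero_of_isCompact hbig hF hdisj
  refine ⟨⟨φ, hφc.is_zero_at_infty⟩, hφI, fun m hm => hφ0 hm, ?_⟩
  calc B.Inorm μ (fun x => f x - (φ (B.π x) : ℂ) * f x)
      ≤ δ * μ.real S :=
        B.Inorm_le_of_norm_le μ hS.measure_lt_top (by rw [union_inv, inv_inv, union_comm]) hδ.le
          (norm_sub_mul_le_of_eqOn_one hδ.le hφI hφ1)
          fun x hx => Or.inl (mem_image_of_mem _ (subset_tsupport f fun h0 => hx (by simp [h0])))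
    _ < δ * (μ.real S + 1) := by gcongr; linarith
    _ = ε := div_mul_cancel₀ ε (by positivity)

/-- for a locally trivial group bundle with Haar measure `μ` on the fiber
group and a closed set `F ⊆ M`, any `f ∈ C_c(𝒢)` vanishing on `𝒢|_F = π⁻¹(F)` is an
`I`-norm limit of functions `φ·f` with `φ ∈ C₀(M∖F)`: for every `ε > 0` there is
`φ ∈ C₀(M)` with `0 ≤ φ ≤ 1`, `φ = 0` on `F`, and `‖f − φ·f‖_I < ε`. -/
theorem statement14 {𝒢 M G : Type*} [TopologicalSpace 𝒢] [TopologicalSpace M]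
    [TopologicalSpace G] [Group G] [IsTopologicalGroup G]
    [LocallyCompactSpace 𝒢] [T2Space 𝒢] [LocallyCompactSpace M] [T2Space M]
    [LocallyCompactSpace G] [T2Space G] [MeasurableSpace G] [BorelSpace G]
    (B : GroupBundle 𝒢 M G) (μ : Measure G) [μ.IsHaarMeasure]
    (F : Set M) (hF : IsClosed F)
    (f : 𝒢 → ℂ) (hf : Continuous f) (hfs : HasCompactSupport f)
    (hvanish : ∀ x : 𝒢, B.π x ∈ F → f x = 0)
    (ε : ℝ) (hε : 0 < ε) :
    ∃ φ : C₀(M, ℝ), (∀ m : M, 0 ≤ φ m ∧ φ m ≤ 1) ∧ (∀ m ∈ F, φ m = 0) ∧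
      B.Inorm μ (fun x => f x - (φ (B.π x) : ℂ) * f x) < ε :=
  statement14_general B μ F hF f hf hfs hvanish ε hε
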